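/- Let 𝔑₁ᶜ be the 3-dimensional algebra with basis e₁, e₂, e₃ and only nonzero product e₁e₁ = e₂. A bilinear form θ = Σ c_{ij}Δ_{ij} on 𝔑₁ᶜ is a Zinbiel 2-cocycle (θ(xy,z) = θ(x, yz+zy)) if and only if c₂₂ = 0, c₂₃ = 0, c₃₂ = 0, and c₁₂ = 2c₂₁; equivalently, the space Z²(𝔑₁ᶜ, ℂ) is spanned by Δ₁₁, Δ₁₂ + 2Δ₂₁, Δ₁₃, Δ₃₁, Δ₃₃. -/
import Mathlib


/-- Standard basis vectors of `Fin 3 → ℂ`. -/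
noncomputable def e (i : Fin 3) : Fin 3 → ℂ := Pi.single i 1

/-- Multiplication of the Zinbiel algebra `𝔑₁ᶜ`: the only nonzero product is `e₁e₁ = e₂`. -/
def mulN1C (a b : Fin 3 → ℂ) : Fin 3 → ℂ := fun k => if k = 1 then a 0 * b 0 else 0

lemma mulN1C_eq (a b : Fin 3 → ℂ) : mulN1C a b = (a 0 * b 0) • e 1 := by
  funext k
  simp [mulN1C, e, Pi.single_apply, eq_comm]

lemma e_apply (i j : Fin 3) : e i j = if i = j then 1 else 0 := by
  simp [e, Pi.single_apply, eq_comm]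

lemma decomp (v : Fin 3 → ℂ) : v = v 0 • e 0 + v 1 • e 1 + v 2 • e 2 := by
  funext k
  fin_cases k <;> simp [e, Pi.single_apply, eq_comm]

theorem stmt_10 (θ : (Fin 3 → ℂ) →ₗ[ℂ] (Fin 3 → ℂ) →ₗ[ℂ] ℂ) :
    (∀ a b c : Fin 3 → ℂ, θ (mulN1C a b) c = θ a (mulN1C b c + mulN1C c b)) ↔
    (θ (e 1) (e 1) = 0 ∧ θ (e 1) (e 2) = 0 ∧ θ (e 2) (e 1) = 0 ∧
      θ (e 1) (e 0) = 2 * θ (e 0) (e 1)) := by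
  constructor
  · intro h
    have h1 := h (e 0) (e 0) (e 1)
    have h2 := h (e 0) (e 0) (e 2)
    have h3 := h (e 2) (e 0) (e 0)
    have h4 := h (e 0) (e 0) (e 0)
    simp (config := { decide := true }) only [mulN1C_eq, e_apply, map_smul, map_add, map_zero,
      LinearMap.smul_apply, LinearMap.zero_apply, smul_eq_mul, if_pos, if_neg, if_true, if_false,
      reduceIte, one_mul, mul_one, zero_mul, mul_zero, one_smul, zero_smul, add_zero,
      zero_add] at h1 h2 h3 h4
    refine ⟨h1, h2, ?_, ?_⟩
    · linear_combination -h3 / 2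
    · linear_combination h4
  · rintro ⟨h1, h2, h3, h4⟩ a b c
    rw [mulN1C_eq, mulN1C_eq, mulN1C_eq]
    rw [decomp c, decomp a]
    simp (config := { decide := true }) only [e_apply, map_add, map_smul, map_zero,
      LinearMap.add_apply, LinearMap.smul_apply, smul_eq_mul, reduceIte, if_pos, if_neg,
      one_mul, mul_one, zero_mul, mul_zero, add_zero, zero_add, smul_add, Pi.add_apply, Pi.smul_apply]
    linear_combination (a 0 * b 0 * c 0) * h4 + (a 0 * b 0 * c 1 - 2 * b 0 * c 0 * a 1) * h1 +
      (a 0 * b 0 * c 2) * h2 + (-2 * b 0 * c 0 * a 2) * h3
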